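/- arXiv:1912.05715 — 4 statements merged into one kernel-verified Lean document; each statement's English description precedes it below -/
import Mathlib

section
/- The multiplication operator M_{e_k} by e_k(z) = z^k/√ω_k is expansive on H²_ω (i.e., ‖e_k f‖ ≥ ‖f‖ for all f ∈ H²_ω with e_k f ∈ H²_ω) if and only if ω_{n+k} ≥ ω_n · ω_k for all integers n ≥ 0. -/
noncomputable section
open Complex Filter

namespace WHS

/-- Membership in the weighted Hardy space: the coefficient sequence `a` satisfies
`∑ ω n * |a n|^2 < ∞`. -/
def memH (ω : ℕ → ℝ) (a : ℕ → ℂ) : Prop :=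
  Summable fun n => ω n * ‖a n‖ ^ 2

/-- The squared norm `‖f‖²` in the weighted Hardy space. -/
def wNorm2 (ω : ℕ → ℝ) (a : ℕ → ℂ) : ℝ := ∑' n, ω n * ‖a n‖ ^ 2

/-- The inner product `⟨f, g⟩ = ∑ ω n * a n * conj (b n)` (linear in the first argument). -/
def wInner (ω : ℕ → ℝ) (a b : ℕ → ℂ) : ℂ :=
  ∑' n, (ω n : ℂ) * a n * (starRingEnd ℂ) (b n)

/-- Coefficients of `z^m * f`. -/
def shift (m : ℕ) (a : ℕ → ℂ) : ℕ → ℂ := fun n => if m ≤ n then a (n - m) else 0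

/-- Coefficients of `p * f` for a polynomial `p`. -/
def polyMul (p : Polynomial ℂ) (a : ℕ → ℂ) : ℕ → ℂ :=
  fun n => ∑ j ∈ Finset.range (n + 1), p.coeff j * a (n - j)

/-- Coefficients of the product of power series with coefficients `b` and `a`. -/
def conv (b a : ℕ → ℂ) : ℕ → ℂ :=
  fun n => ∑ j ∈ Finset.range (n + 1), b j * a (n - j)

/-- `f` is an `H²_ω`-inner function: `f ∈ H²_ω`, `‖f‖ = 1` and `⟨z^m f, f⟩ = 0` for all `m ≥ 1`. -/
def IsInner (ω : ℕ → ℝ) (a : ℕ → ℂ) : Prop :=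
  memH ω a ∧ wNorm2 ω a = 1 ∧ ∀ m : ℕ, 1 ≤ m → wInner ω (shift m a) a = 0

end WHS

/-! Multiplication by `z^k / √ω_k` moves the coefficient `a n` to the weight `ω (n + k) / ω k`,
so `‖e_k f‖² - ‖f‖² = ∑ (ω (n + k) / ω k - ω n) |a n|²`. This is nonnegative for all `f` iff
every coefficient `ω (n + k) / ω k - ω n` is, as testing on the monomials `z^n` shows. -/

namespace WHS

lemma shift_add (k : ℕ) (a : ℕ → ℂ) (n : ℕ) : shift k a (n + k) = a n := by
  simp [shift]

lemma comp_shift_eq_zero_of_notMem_range {F : ℕ → ℂ → ℝ} (hF : ∀ m, F m 0 = 0) {k m : ℕ}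
    (a : ℕ → ℂ) (hm : m ∉ Set.range (· + k)) : F m (shift k a m) = 0 := by
  rw [shift, if_neg fun hkm => hm ⟨m - k, Nat.sub_add_cancel hkm⟩, hF]

lemma tsum_comp_shift {F : ℕ → ℂ → ℝ} (hF : ∀ m, F m 0 = 0) (k : ℕ) (a : ℕ → ℂ) :
    ∑' m, F m (shift k a m) = ∑' n, F (n + k) (a n) := by
  rw [← (add_left_injective k).tsum_eq
    (Function.support_subset_iff'.2 fun m => comp_shift_eq_zero_of_notMem_range hF a)]
  simp only [shift_add]

lemma summable_comp_shift_iff {F : ℕ → ℂ → ℝ} (hF : ∀ m, F m 0 = 0) (k : ℕ) (a : ℕ → ℂ) :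
    Summable (fun m => F m (shift k a m)) ↔ Summable fun n => F (n + k) (a n) := by
  rw [← (add_left_injective k).summable_iff
    fun m => comp_shift_eq_zero_of_notMem_range hF a]
  simp only [Function.comp_def, shift_add]

lemma wNorm2_const_mul_shift (ω : ℕ → ℝ) (c : ℂ) (k : ℕ) (a : ℕ → ℂ) :
    wNorm2 ω (fun n => c * shift k a n) = ‖c‖ ^ 2 * ∑' n, ω (n + k) * ‖a n‖ ^ 2 := by
  rw [wNorm2, tsum_comp_shift (F := fun m z => ω m * ‖c * z‖ ^ 2) (by simp), ← tsum_mul_left]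
  congr 1 with n
  rw [norm_mul, mul_pow]
  ring

lemma memH_const_mul_shift_iff {ω : ℕ → ℝ} {c : ℂ} (hc : c ≠ 0) (k : ℕ) (a : ℕ → ℂ) :
    memH ω (fun n => c * shift k a n) ↔ Summable fun n => ω (n + k) * ‖a n‖ ^ 2 := by
  rw [memH, summable_comp_shift_iff (F := fun m z => ω m * ‖c * z‖ ^ 2) (by simp),
    ← summable_mul_left_iff (pow_ne_zero 2 (norm_ne_zero_iff.2 hc))
      (f := fun n => ω (n + k) * ‖a n‖ ^ 2)]
  congr! 2 with n
  rw [norm_mul, mul_pow]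
  ring

lemma summable_mul_norm_single_sq (w : ℕ → ℝ) (n : ℕ) :
    Summable fun m => w m * ‖(Pi.single n 1 : ℕ → ℂ) m‖ ^ 2 :=
  summable_of_ne_finset_zero (s := {n}) fun m hm => by
    simp [Finset.notMem_singleton.1 hm]

lemma tsum_mul_norm_single_sq (w : ℕ → ℝ) (n : ℕ) :
    ∑' m, w m * ‖(Pi.single n 1 : ℕ → ℂ) m‖ ^ 2 = w n := by
  rw [tsum_eq_single n fun m hm => by simp [hm]]
  simp

lemma norm_inv_ofReal_sqrt_sq {x : ℝ} (hx : 0 ≤ x) : ‖((Real.sqrt x : ℂ))⁻¹‖ ^ 2 = x⁻¹ := by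
  rw [norm_inv, inv_pow, Complex.norm_real, Real.norm_eq_abs, sq_abs, Real.sq_sqrt hx]

end WHS

theorem stmt4_general (ω : ℕ → ℝ) (hpos : ∀ n, 0 < ω n) (k : ℕ) :
    (∀ a : ℕ → ℂ, WHS.memH ω a →
        WHS.memH ω (fun n => ((Real.sqrt (ω k) : ℂ))⁻¹ * WHS.shift k a n) →
        WHS.wNorm2 ω a ≤ WHS.wNorm2 ω (fun n => ((Real.sqrt (ω k) : ℂ))⁻¹ * WHS.shift k a n)) ↔
      ∀ n : ℕ, ω n * ω k ≤ ω (n + k) := by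
  set c : ℂ := ((Real.sqrt (ω k) : ℂ))⁻¹
  have hc : ‖c‖ ^ 2 = (ω k)⁻¹ := WHS.norm_inv_ofReal_sqrt_sq (hpos k).le
  have hc0 : c ≠ 0 := inv_ne_zero (Complex.ofReal_ne_zero.2 (Real.sqrt_pos.2 (hpos k)).ne')
  constructor
  · intro H n
    have hexp := H (Pi.single n 1) (WHS.summable_mul_norm_single_sq ω n)
      ((WHS.memH_const_mul_shift_iff hc0 k _).2 (WHS.summable_mul_norm_single_sq _ n))
    rw [WHS.wNorm2_const_mul_shift, WHS.wNorm2, WHS.tsum_mul_norm_single_sq,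
      WHS.tsum_mul_norm_single_sq, hc, ← div_eq_inv_mul, le_div_iff₀ (hpos k)] at hexp
    exact hexp
  · intro H a ha hb
    rw [WHS.wNorm2_const_mul_shift, hc, ← tsum_mul_left]
    refine ha.tsum_le_tsum (fun n => ?_)
      (((WHS.memH_const_mul_shift_iff hc0 k a).1 hb).mul_left _)
    have hweight : ω n ≤ (ω k)⁻¹ * ω (n + k) := by
      rw [← div_eq_inv_mul, le_div_iff₀ (hpos k)]
      exact H n
    calc ω n * ‖a n‖ ^ 2 ≤ (ω k)⁻¹ * ω (n + k) * ‖a n‖ ^ 2 := by gcongr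
      _ = (ω k)⁻¹ * (ω (n + k) * ‖a n‖ ^ 2) := mul_assoc _ _ _

/-- multiplication by `e_k(z) = z^k/√(ω k)` is expansive on `H²_ω`
iff `ω (n+k) ≥ ω n * ω k` for all `n ≥ 0`. -/
theorem stmt4 (ω : ℕ → ℝ) (hpos : ∀ n, 0 < ω n) (hω0 : ω 0 = 1)
    (hlim : Filter.Tendsto (fun n => ω (n + 1) / ω n) Filter.atTop (nhds 1))
    (k : ℕ) (hk : 1 ≤ k) :
    (∀ a : ℕ → ℂ, WHS.memH ω a →
        WHS.memH ω (fun n => ((Real.sqrt (ω k) : ℂ))⁻¹ * WHS.shift k a n) →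
        WHS.wNorm2 ω a ≤ WHS.wNorm2 ω (fun n => ((Real.sqrt (ω k) : ℂ))⁻¹ * WHS.shift k a n)) ↔
      ∀ n : ℕ, ω n * ω k ≤ ω (n + k) :=
  stmt4_general ω hpos k
end
end

section
/- A function f ∈ H²_ω is H²_ω-inner if and only if ‖f‖ = 1 and for every integer k ≥ 1 there exists a constant C_k such that ‖f·(z^k + λ)‖² ≤ C_k + |λ|² for all λ ∈ ℂ. -/
/-! Expanding the square gives
`‖z^k f + λ f‖² = ‖z^k f‖² + 2 Re (conj λ ⟨z^k f, f⟩) + |λ|² ‖f‖²`. When `‖f‖ = 1` the bound holds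
with `C_k = ‖z^k f‖²` as soon as `⟨z^k f, f⟩ = 0`, while a nonzero `⟨z^k f, f⟩` makes the linear
term unbounded above in `λ`. The ratio condition on `ω` bounds `ω (n + k) / ω n`, so that
`z^k f ∈ H²_ω` and the expansion is legitimate. -/

noncomputable section
open Complex Filter

namespace WHS

variable {ω : ℕ → ℝ} {f a b : ℕ → ℂ}

theorem exists_pow_bound_of_bddAbove_ratio (hpos : ∀ n, 0 < ω n)
    (hbdd : BddAbove (Set.range fun n => ω (n + 1) / ω n)) :
    ∃ M : ℝ, ∀ k n, ω (n + k) ≤ M ^ k * ω n := by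
  obtain ⟨B, hB⟩ := hbdd
  have hstep : ∀ n, ω (n + 1) ≤ max B 0 * ω n := fun n =>
    (div_le_iff₀ (hpos n)).mp (le_max_of_le_left (hB (Set.mem_range_self n)))
  refine ⟨max B 0, fun k n => ?_⟩
  induction k with
  | zero => simp
  | succ k ih =>
    calc ω (n + k + 1) ≤ max B 0 * ω (n + k) := hstep _
      _ ≤ max B 0 * (max B 0 ^ k * ω n) := mul_le_mul_of_nonneg_left ih (le_max_right _ _)
      _ = max B 0 ^ (k + 1) * ω n := by ring

theorem memH_shift (hpos : ∀ n, 0 < ω n)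
    (hbdd : BddAbove (Set.range fun n => ω (n + 1) / ω n)) (hf : memH ω f) (k : ℕ) :
    memH ω (shift k f) := by
  obtain ⟨M, hM⟩ := exists_pow_bound_of_bddAbove_ratio hpos hbdd
  refine (summable_nat_add_iff k).mp <|
    Summable.of_nonneg_of_le (fun n => by positivity [(hpos (n + k)).le]) (fun n => ?_)
      (hf.mul_left (M ^ k))
  calc ω (n + k) * ‖shift k f (n + k)‖ ^ 2 = ω (n + k) * ‖f n‖ ^ 2 := by simp [shift]
    _ ≤ M ^ k * ω n * ‖f n‖ ^ 2 := by gcongr; exact hM k n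
    _ = M ^ k * (ω n * ‖f n‖ ^ 2) := by ring

theorem summable_wInner (hω : ∀ n, 0 ≤ ω n) (ha : memH ω a) (hb : memH ω b) :
    Summable fun n => (ω n : ℂ) * a n * (starRingEnd ℂ) (b n) := by
  refine Summable.of_norm <| Summable.of_nonneg_of_le (fun n => norm_nonneg _) (fun n => ?_)
    ((ha.add hb).mul_left (1 / 2))
  have hamgm : ‖a n‖ * ‖b n‖ ≤ (‖a n‖ ^ 2 + ‖b n‖ ^ 2) / 2 := by
    nlinarith [sq_nonneg (‖a n‖ - ‖b n‖)]
  calc ‖(ω n : ℂ) * a n * (starRingEnd ℂ) (b n)‖ = ω n * (‖a n‖ * ‖b n‖) := by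
        simp [abs_of_nonneg (hω n), mul_assoc]
    _ ≤ ω n * ((‖a n‖ ^ 2 + ‖b n‖ ^ 2) / 2) := mul_le_mul_of_nonneg_left hamgm (hω n)
    _ = 1 / 2 * (ω n * ‖a n‖ ^ 2 + ω n * ‖b n‖ ^ 2) := by ring

theorem wNorm2_add_smul (hω : ∀ n, 0 ≤ ω n) (ha : memH ω a) (hb : memH ω b) (lam : ℂ) :
    wNorm2 ω (fun n => a n + lam * b n) =
      wNorm2 ω a + 2 * ((starRingEnd ℂ) lam * wInner ω a b).re + ‖lam‖ ^ 2 * wNorm2 ω b := by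
  have hcross : HasSum (fun n => 2 * ((starRingEnd ℂ) lam *
      ((ω n : ℂ) * a n * (starRingEnd ℂ) (b n))).re)
      (2 * ((starRingEnd ℂ) lam * wInner ω a b).re) :=
    (Complex.hasSum_re ((summable_wInner hω ha hb).hasSum.mul_left _)).mul_left 2
  refine (((ha.hasSum.add hcross).add (hb.hasSum.mul_left (‖lam‖ ^ 2))).congr_fun
    fun n => ?_).tsum_eq
  have hre : ((starRingEnd ℂ) lam * ((ω n : ℂ) * a n * (starRingEnd ℂ) (b n))).re =
      ω n * (a n * (starRingEnd ℂ) (lam * b n)).re := by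
    rw [← Complex.re_ofReal_mul, map_mul]; ring_nf
  simp only [Complex.sq_norm, Complex.normSq_add, Complex.normSq_mul, hre]
  ring

theorem eq_zero_of_forall_re_conj_mul_le {c : ℂ} {D : ℝ}
    (h : ∀ lam : ℂ, 2 * ((starRingEnd ℂ) lam * c).re ≤ D) : c = 0 := by
  by_contra hc
  have := h (((D + 1) / 2 : ℝ) / (starRingEnd ℂ) c)
  rw [map_div₀, Complex.conj_ofReal, Complex.conj_conj, div_mul_cancel₀ _ hc,
    Complex.ofReal_re] at this
  linarith

theorem wInner_eq_zero_iff_exists_bound (hω : ∀ n, 0 ≤ ω n) (ha : memH ω a) (hb : memH ω b)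
    (hb1 : wNorm2 ω b = 1) :
    wInner ω a b = 0 ↔
      ∃ C : ℝ, ∀ lam : ℂ, wNorm2 ω (fun n => a n + lam * b n) ≤ C + ‖lam‖ ^ 2 := by
  simp_rw [wNorm2_add_smul hω ha hb, hb1, mul_one]
  constructor
  · intro h
    exact ⟨wNorm2 ω a, fun lam => by simp [h]⟩
  · rintro ⟨C, hC⟩
    exact eq_zero_of_forall_re_conj_mul_le (D := C - wNorm2 ω a) fun lam => by
      linarith [hC lam]

end WHS

theorem stmt6_general (ω : ℕ → ℝ) (hpos : ∀ n, 0 < ω n)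
    (hlim : Filter.Tendsto (fun n => ω (n + 1) / ω n) Filter.atTop (nhds 1))
    (f : ℕ → ℂ) (hf : WHS.memH ω f) :
    WHS.IsInner ω f ↔
      (WHS.wNorm2 ω f = 1 ∧ ∀ k : ℕ, 1 ≤ k → ∃ C : ℝ, ∀ lam : ℂ,
        WHS.wNorm2 ω (fun n => WHS.shift k f n + lam * f n) ≤ C + ‖lam‖ ^ 2) := by
  have hshift := WHS.memH_shift hpos hlim.bddAbove_range hf
  rw [WHS.IsInner, and_iff_right hf]
  exact and_congr_right fun hnorm => forall₂_congr fun k _ =>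
    WHS.wInner_eq_zero_iff_exists_bound (fun n => (hpos n).le) (hshift k) hf hnorm

/-- `f ∈ H²_ω` is inner iff `‖f‖ = 1` and for every `k ≥ 1` there is a
constant `C_k` with `‖f·(z^k + λ)‖² ≤ C_k + |λ|²` for all `λ ∈ ℂ`. -/
theorem stmt6 (ω : ℕ → ℝ) (hpos : ∀ n, 0 < ω n) (hω0 : ω 0 = 1)
    (hlim : Filter.Tendsto (fun n => ω (n + 1) / ω n) Filter.atTop (nhds 1))
    (f : ℕ → ℂ) (hf : WHS.memH ω f) :
    WHS.IsInner ω f ↔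
      (WHS.wNorm2 ω f = 1 ∧ ∀ k : ℕ, 1 ≤ k → ∃ C : ℝ, ∀ lam : ℂ,
        WHS.wNorm2 ω (fun n => WHS.shift k f n + lam * f n) ≤ C + ‖lam‖ ^ 2) :=
  stmt6_general ω hpos hlim f hf
end
end

section
/- If M is a nonzero z-invariant closed subspace of H²_ω, d ≥ 0 is an integer with z^k ∈ M^⊥ for 0 ≤ k ≤ d−1 and z^d ∉ M^⊥, and u = P_M(z^d) denotes the orthogonal projection of z^d onto M, then u/‖u‖ is an H²_ω-inner function. -/
noncomputable section
open Complex Filter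

/-! With `s = z^d` and `u = P_M s`: for `m ≥ 1` the function `z^m u` lies in `M` and vanishes to
order `> d`, because `u ∈ M` vanishes to order `d` (it is orthogonal to `z^k`, `k < d`). Hence
`⟪s, z^m u⟫ = 0`, and as `s - u ⊥ M` also `⟪u, z^m u⟫ = 0`, which is the inner condition for `u`.
Normalising `u` gives the claim. -/

open scoped InnerProductSpace ComplexConjugate

local notation "ℓ²" => lp (fun _ : ℕ => ℂ) 2

theorem Submodule.inner_eq_zero_of_sub_mem_orthogonal {𝕜 E : Type*} [RCLike 𝕜]
    [NormedAddCommGroup E] [InnerProductSpace 𝕜 E] {K : Submodule 𝕜 E} {s u v : E}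
    (hsu : s - u ∈ Kᗮ) (hv : v ∈ K) (hsv : ⟪s, v⟫_𝕜 = 0) : ⟪u, v⟫_𝕜 = 0 := by
  have h := (Submodule.mem_orthogonal' K _).1 hsu v hv
  rwa [inner_sub_left, hsv, zero_sub, neg_eq_zero] at h

theorem lp.apply_eq_zero_of_single_mem_orthogonal {ι 𝕜 : Type*} [RCLike 𝕜] [DecidableEq ι]
    {K : Submodule 𝕜 (lp (fun _ : ι => 𝕜) 2)} {i : ι} {c : 𝕜} (hi : lp.single 2 i c ∈ Kᗮ)
    (hc : c ≠ 0) {x : lp (fun _ : ι => 𝕜) 2} (hx : x ∈ K) : x i = 0 := by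
  have h := (Submodule.mem_orthogonal' K _).1 hi x hx
  rw [lp.inner_single_left, RCLike.inner_apply'] at h
  exact (mul_eq_zero.1 h).resolve_left (by simpa using hc)

theorem ContinuousLinearMap.pow_apply_mem {R E : Type*} [Semiring R] [TopologicalSpace E]
    [AddCommMonoid E] [Module R E] {T : E →L[R] E} {K : Submodule R E}
    (hK : ∀ x ∈ K, T x ∈ K) (m : ℕ) {x : E} (hx : x ∈ K) : (T ^ m) x ∈ K := by
  induction m with
  | zero => simpa using hx
  | succ m ih => rw [pow_succ', mul_apply_eq_comp]; exact hK _ ih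

namespace WHS

theorem shift_succ (m : ℕ) (a : ℕ → ℂ) : shift (m + 1) a = shift 1 (shift m a) := by
  funext n
  rcases n with _ | n
  · simp [shift]
  · by_cases h : m ≤ n <;> simp [shift, h, Nat.add_sub_add_right]

/-- `x ↦ ∑ (x n / √(ω n)) zⁿ`, the isometry `ℓ² ≅ H²_ω` through which the statement
models `H²_ω`. -/
def ofL2 (ω : ℕ → ℝ) (x : ℓ²) : ℕ → ℂ := fun n => x n / (Real.sqrt (ω n) : ℂ)

variable {ω : ℕ → ℝ}

theorem sqrt_weight_ne_zero (hpos : ∀ n, 0 < ω n) (n : ℕ) :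
    ((Real.sqrt (ω n) : ℝ) : ℂ) ≠ 0 :=
  Complex.ofReal_ne_zero.2 (Real.sqrt_pos.2 (hpos n)).ne'

theorem ofL2_eq_zero_iff (hpos : ∀ n, 0 < ω n) (x : ℓ²) (n : ℕ) :
    ofL2 ω x n = 0 ↔ x n = 0 := by
  simp [ofL2, sqrt_weight_ne_zero hpos n]

theorem weight_mul_norm_ofL2_sq (hpos : ∀ n, 0 < ω n) (x : ℓ²) (n : ℕ) :
    ω n * ‖ofL2 ω x n‖ ^ 2 = ‖x n‖ ^ 2 := by
  rw [ofL2, norm_div, Complex.norm_real, Real.norm_of_nonneg (Real.sqrt_nonneg _), div_pow,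
    Real.sq_sqrt (hpos n).le]
  field_simp [(hpos n).ne']

theorem memH_ofL2 (hpos : ∀ n, 0 < ω n) (x : ℓ²) : memH ω (ofL2 ω x) := by
  have h := (lp.memℓp x).summable (p := 2) (by norm_num)
  simp only [ENNReal.toReal_ofNat, Real.rpow_two] at h
  exact h.congr fun n => (weight_mul_norm_ofL2_sq hpos x n).symm

theorem wNorm2_ofL2 (hpos : ∀ n, 0 < ω n) (x : ℓ²) : wNorm2 ω (ofL2 ω x) = ‖x‖ ^ 2 := by
  have h := lp.norm_rpow_eq_tsum (p := 2) (by norm_num) x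
  simp only [ENNReal.toReal_ofNat, Real.rpow_two] at h
  rw [wNorm2, h]
  exact tsum_congr (weight_mul_norm_ofL2_sq hpos x)

theorem wInner_ofL2 (hpos : ∀ n, 0 < ω n) (x y : ℓ²) :
    wInner ω (ofL2 ω x) (ofL2 ω y) = ⟪y, x⟫_ℂ := by
  rw [wInner, lp.inner_eq_tsum]
  refine tsum_congr fun n => ?_
  have hω : ((ω n : ℝ) : ℂ) = (Real.sqrt (ω n) : ℂ) * (Real.sqrt (ω n) : ℂ) := by
    rw [← Complex.ofReal_mul, Real.mul_self_sqrt (hpos n).le]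
  rw [ofL2, ofL2, map_div₀, Complex.conj_ofReal, hω, RCLike.inner_apply']
  field_simp [sqrt_weight_ne_zero hpos n]

/-- Multiplication by `z` on `H²_ω`, transported to `ℓ²` by `ofL2`. -/
def IsWeightedShift (ω : ℕ → ℝ) (Mz : ℓ² →L[ℂ] ℓ²) : Prop :=
  (∀ x : ℓ², (Mz x) 0 = 0) ∧ ∀ (x : ℓ²) (n : ℕ),
    (Mz x) (n + 1) = ((Real.sqrt (ω (n + 1)) / Real.sqrt (ω n) : ℝ) : ℂ) * x n

namespace IsWeightedShift

variable {Mz : ℓ² →L[ℂ] ℓ²}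

theorem ofL2_apply (hMz : IsWeightedShift ω Mz) (hpos : ∀ n, 0 < ω n) (x : ℓ²) :
    ofL2 ω (Mz x) = shift 1 (ofL2 ω x) := by
  funext n
  rcases n with _ | n
  · simp [ofL2, shift, hMz.1]
  · simp only [ofL2, shift, hMz.2, le_add_iff_nonneg_left, zero_le, if_true,
      Nat.add_sub_cancel]
    push_cast
    field_simp [sqrt_weight_ne_zero hpos n, sqrt_weight_ne_zero hpos (n + 1)]

theorem ofL2_pow_apply (hMz : IsWeightedShift ω Mz) (hpos : ∀ n, 0 < ω n) (m : ℕ)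
    (x : ℓ²) :
    ofL2 ω ((Mz ^ m) x) = shift m (ofL2 ω x) := by
  induction m with
  | zero => funext n; simp [shift]
  | succ m ih =>
    rw [pow_succ', mul_apply_eq_comp, hMz.ofL2_apply hpos, ih]
    exact (shift_succ m _).symm

theorem pow_apply_eq_zero (hMz : IsWeightedShift ω Mz) (hpos : ∀ n, 0 < ω n)
    {d : ℕ} {x : ℓ²} (hx : ∀ k < d, x k = 0) (m : ℕ) {n : ℕ} (hn : n < d + m) :
    (Mz ^ m) x n = 0 := by
  rw [← ofL2_eq_zero_iff hpos, hMz.ofL2_pow_apply hpos, shift]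
  split_ifs with h
  · exact (ofL2_eq_zero_iff hpos x _).2 (hx _ (by omega))
  · rfl

end IsWeightedShift

end WHS

theorem stmt12_general (ω : ℕ → ℝ) (hpos : ∀ n, 0 < ω n)
    (Mz : lp (fun _ : ℕ => ℂ) 2 →L[ℂ] lp (fun _ : ℕ => ℂ) 2)
    (hMz0 : ∀ x : lp (fun _ : ℕ => ℂ) 2, (Mz x) 0 = 0)
    (hMzS : ∀ (x : lp (fun _ : ℕ => ℂ) 2) (n : ℕ),
      (Mz x) (n + 1) = ((Real.sqrt (ω (n + 1)) / Real.sqrt (ω n) : ℝ) : ℂ) * x n)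
    (M : Submodule ℂ (lp (fun _ : ℕ => ℂ) 2)) (hinv : ∀ x ∈ M, Mz x ∈ M)
    (d : ℕ)
    (hperp : ∀ k < d, lp.single 2 k ((Real.sqrt (ω k) : ℂ)) ∈ Mᗮ)
    (hd : lp.single 2 d ((Real.sqrt (ω d) : ℂ)) ∉ Mᗮ)
    (u : lp (fun _ : ℕ => ℂ) 2) (huM : u ∈ M)
    (hproj : lp.single 2 d ((Real.sqrt (ω d) : ℂ)) - u ∈ Mᗮ) :
    WHS.IsInner ω (fun n => ((‖u‖ : ℝ) : ℂ)⁻¹ * (u n / (Real.sqrt (ω n) : ℂ))) := by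
  have hMz : WHS.IsWeightedShift ω Mz := ⟨hMz0, hMzS⟩
  have hu : u ≠ 0 := by
    rintro rfl
    exact hd (by simpa using hproj)
  have hu_low : ∀ k < d, u k = 0 := fun k hk => lp.apply_eq_zero_of_single_mem_orthogonal
    (hperp k hk) (WHS.sqrt_weight_ne_zero hpos k) huM
  have hwandering : ∀ m, 1 ≤ m → ⟪u, (Mz ^ m) u⟫_ℂ = 0 := fun m hm =>
    Submodule.inner_eq_zero_of_sub_mem_orthogonal hproj
      (ContinuousLinearMap.pow_apply_mem hinv m huM) (by
        rw [lp.inner_single_left, hMz.pow_apply_eq_zero hpos hu_low m (by omega),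
          inner_zero_right])
  set c : ℂ := ((‖u‖ : ℝ) : ℂ)⁻¹
  have hfun : (fun n => c * (u n / (Real.sqrt (ω n) : ℂ))) = WHS.ofL2 ω (c • u) :=
    funext fun n => by simp [WHS.ofL2, mul_div_assoc]
  have hnorm : ‖c • u‖ = 1 := by simp [c, norm_smul, hu]
  refine hfun ▸ ⟨WHS.memH_ofL2 hpos _, by rw [WHS.wNorm2_ofL2 hpos, hnorm, one_pow],
    fun m hm => ?_⟩
  rw [← hMz.ofL2_pow_apply hpos, WHS.wInner_ofL2 hpos, map_smul, inner_smul_left,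
    inner_smul_right, hwandering m hm, mul_zero, mul_zero]

/-- if `M` is a nonzero `z`-invariant closed subspace of `H²_ω`
(modelled on `ℓ²`), `z^k ∈ M^⊥` for `k < d`, `z^d ∉ M^⊥`, and `u` is the orthogonal
projection of `z^d` onto `M` (i.e. `u ∈ M` and `z^d − u ∈ M^⊥`), then `u/‖u‖` is
`H²_ω`-inner. -/
theorem stmt12 (ω : ℕ → ℝ) (hpos : ∀ n, 0 < ω n) (hω0 : ω 0 = 1)
    (hlim : Filter.Tendsto (fun n => ω (n + 1) / ω n) Filter.atTop (nhds 1))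
    (Mz : lp (fun _ : ℕ => ℂ) 2 →L[ℂ] lp (fun _ : ℕ => ℂ) 2)
    (hMz0 : ∀ x : lp (fun _ : ℕ => ℂ) 2, (Mz x) 0 = 0)
    (hMzS : ∀ (x : lp (fun _ : ℕ => ℂ) 2) (n : ℕ),
      (Mz x) (n + 1) = ((Real.sqrt (ω (n + 1)) / Real.sqrt (ω n) : ℝ) : ℂ) * x n)
    (M : Submodule ℂ (lp (fun _ : ℕ => ℂ) 2)) (hMcl : IsClosed (M : Set (lp (fun _ : ℕ => ℂ) 2)))
    (hMne : M ≠ ⊥) (hinv : ∀ x ∈ M, Mz x ∈ M)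
    (d : ℕ)
    (hperp : ∀ k < d, lp.single 2 k ((Real.sqrt (ω k) : ℂ)) ∈ Mᗮ)
    (hd : lp.single 2 d ((Real.sqrt (ω d) : ℂ)) ∉ Mᗮ)
    (u : lp (fun _ : ℕ => ℂ) 2) (huM : u ∈ M)
    (hproj : lp.single 2 d ((Real.sqrt (ω d) : ℂ)) - u ∈ Mᗮ) :
    WHS.IsInner ω (fun n => ((‖u‖ : ℝ) : ℂ)⁻¹ * (u n / (Real.sqrt (ω n) : ℂ))) :=
  stmt12_general ω hpos Mz hMz0 hMzS M hinv d hperp hd u huM hproj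
end
end

section
/- If f is an H²_ω-inner function and d ≥ 0 is the largest integer such that z^d divides f (i.e., f = z^d g with g(0) ≠ 0), then ⟨z^d, f⟩ · f equals the orthogonal projection of z^d onto the z-invariant subspace [f] generated by f. -/
noncomputable section
open Complex Filter

/-! Under the unitary `a ↦ (√ω n * a n)` from `H²_ω` onto `ℓ²`, `[f]` is the closed span of
the vectors `z^m f`, `m ≥ 0`. Innerness says `‖f‖ = 1` and `z^m f ⊥ f` for `m ≥ 1`; and since `f`
vanishes below index `d`, `z^m f` vanishes at index `d` for `m ≥ 1`, i.e. `z^m f ⊥ z^d`. Hence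
`z^d - ⟨z^d, f⟩ f` is orthogonal to every `z^m f`, hence to `[f]`. -/

open Polynomial

section InnerProductSpace

variable {𝕜 E : Type*} [RCLike 𝕜] [NormedAddCommGroup E] [InnerProductSpace 𝕜 E]

theorem sub_inner_smul_mem_orthogonal_span {ι : Type*} (v : ι → E) (i₀ : ι) (e : E)
    (hnorm : inner 𝕜 (v i₀) (v i₀) = 1) (horth : ∀ i ≠ i₀, inner 𝕜 (v i) (v i₀) = 0)
    (he : ∀ i ≠ i₀, inner 𝕜 (v i) e = 0) :
    e - inner 𝕜 (v i₀) e • v i₀ ∈ (Submodule.span 𝕜 (Set.range v))ᗮ := by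
  refine (Submodule.isOrtho_span.mpr ?_).ge (Submodule.mem_span_singleton_self _)
  rintro _ ⟨i, rfl⟩ _ rfl
  rw [inner_sub_right, inner_smul_right]
  by_cases hi : i = i₀
  · rw [hi, hnorm, mul_one, sub_self]
  · simp [he i hi, horth i hi]

end InnerProductSpace

namespace WHS

theorem polyMul_add (p q : ℂ[X]) (a : ℕ → ℂ) :
    polyMul (p + q) a = polyMul p a + polyMul q a := by
  funext n
  simp [polyMul, add_mul, Finset.sum_add_distrib]

theorem polyMul_smul (c : ℂ) (p : ℂ[X]) (a : ℕ → ℂ) :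
    polyMul (c • p) a = c • polyMul p a := by
  funext n
  simp [polyMul, Finset.mul_sum, mul_assoc]

theorem polyMul_X_pow (m : ℕ) (a : ℕ → ℂ) : polyMul (X ^ m) a = shift m a := by
  funext n
  simp [polyMul, shift, coeff_X_pow]

@[simp]
theorem shift_zero (a : ℕ → ℂ) : shift 0 a = a := by
  funext n
  simp [shift]

theorem shift_apply_eq_zero {m n : ℕ} {a : ℕ → ℂ} (hm : m ≠ 0) (ha : ∀ k < n, a k = 0) :
    shift m a n = 0 := by
  unfold shift
  split_ifs with h
  · exact ha _ (by omega)
  · rfl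

theorem wInner_self (ω : ℕ → ℝ) (a : ℕ → ℂ) : wInner ω a a = wNorm2 ω a := by
  rw [wInner, wNorm2, Complex.ofReal_tsum]
  congr 1
  funext n
  rw [mul_assoc, Complex.mul_conj, Complex.normSq_eq_norm_sq]
  push_cast
  ring

theorem span_range_le_span_range_X_pow {PM : ℂ[X] → lp (fun _ : ℕ => ℂ) 2} {s a : ℕ → ℂ}
    (hPM : ∀ p n, PM p n = s n * polyMul p a n) :
    Submodule.span ℂ (Set.range PM) ≤ Submodule.span ℂ (Set.range fun m => PM (X ^ m)) := by
  rw [Submodule.span_le]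
  rintro _ ⟨p, rfl⟩
  induction p using Polynomial.induction_on' with
  | add p q hp hq =>
    have hadd : PM (p + q) = PM p + PM q := by
      ext n
      simp [hPM, polyMul_add, mul_add]
    rw [hadd]
    exact add_mem hp hq
  | monomial m c =>
    have hsmul : PM (monomial m c) = c • PM (X ^ m) := by
      ext n
      rw [← smul_X_eq_monomial]
      simp [hPM, polyMul_smul, mul_left_comm]
    rw [hsmul]
    exact Submodule.smul_mem _ c (Submodule.subset_span ⟨m, rfl⟩)

theorem inner_eq_conj_wInner {ω : ℕ → ℝ} (hω : ∀ n, 0 ≤ ω n) {a b : ℕ → ℂ}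
    {f g : lp (fun _ : ℕ => ℂ) 2} (hf : ∀ n, f n = (Real.sqrt (ω n) : ℂ) * a n)
    (hg : ∀ n, g n = (Real.sqrt (ω n) : ℂ) * b n) :
    inner ℂ f g = starRingEnd ℂ (wInner ω a b) := by
  rw [lp.inner_eq_tsum, wInner, starRingEnd_apply, tsum_star]
  congr 1
  funext n
  have hsq : (Real.sqrt (ω n) : ℂ) * (Real.sqrt (ω n) : ℂ) = ω n := by
    rw [← Complex.ofReal_mul, Real.mul_self_sqrt (hω n)]
  rw [hf, hg, RCLike.inner_apply', ← hsq]
  simp only [star_mul', map_mul, Complex.conj_ofReal, Complex.star_def, Complex.conj_conj]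
  ring

end WHS

theorem stmt13_general (ω : ℕ → ℝ) (hpos : ∀ n, 0 < ω n)
    (f : lp (fun _ : ℕ => ℂ) 2)
    (hf : WHS.IsInner ω (fun n => f n / (Real.sqrt (ω n) : ℂ)))
    (d : ℕ) (hvanish : ∀ n < d, f n = 0)
    (PM : Polynomial ℂ → lp (fun _ : ℕ => ℂ) 2)
    (hPM : ∀ (p : Polynomial ℂ) (n : ℕ),
      (PM p) n = (Real.sqrt (ω n) : ℂ) *
        ∑ j ∈ Finset.range (n + 1), p.coeff j * (f (n - j) / (Real.sqrt (ω (n - j)) : ℂ))) :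
    ((inner ℂ f (lp.single 2 d ((Real.sqrt (ω d) : ℂ))) : ℂ) • f ∈
        (Submodule.span ℂ (Set.range PM)).topologicalClosure) ∧
      lp.single 2 d ((Real.sqrt (ω d) : ℂ)) -
          (inner ℂ f (lp.single 2 d ((Real.sqrt (ω d) : ℂ))) : ℂ) • f ∈
        ((Submodule.span ℂ (Set.range PM)).topologicalClosure)ᗮ := by
  obtain ⟨-, hnorm, hinner⟩ := hf
  have hω (n : ℕ) : 0 ≤ ω n := (hpos n).le
  set a : ℕ → ℂ := fun n => f n / (Real.sqrt (ω n) : ℂ)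
  have hfa (n : ℕ) : f n = (Real.sqrt (ω n) : ℂ) * a n :=
    (mul_div_cancel₀ _ (by simpa using (Real.sqrt_pos.mpr (hpos n)).ne')).symm
  have hPMa : ∀ p n, PM p n = (Real.sqrt (ω n) : ℂ) * WHS.polyMul p a n := hPM
  have hPMX (m n : ℕ) : PM (X ^ m) n = (Real.sqrt (ω n) : ℂ) * WHS.shift m a n := by
    rw [hPMa, WHS.polyMul_X_pow]
  have hPM0 : PM (X ^ 0) = f := lp.ext (funext fun n => by rw [hPMX, WHS.shift_zero, hfa])
  have hPMf (m : ℕ) : inner ℂ (PM (X ^ m)) f = starRingEnd ℂ (WHS.wInner ω (WHS.shift m a) a) :=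
    WHS.inner_eq_conj_wInner hω (hPMX m) hfa
  have ha_vanish : ∀ n < d, a n = 0 := fun n hn => by simp [a, hvanish n hn]
  refine ⟨Submodule.smul_mem _ _ (Submodule.le_topologicalClosure _
    (Submodule.subset_span ⟨1, by simpa using hPM0⟩)), ?_⟩
  rw [Submodule.orthogonal_closure, ← hPM0]
  refine Submodule.orthogonal_le (WHS.span_range_le_span_range_X_pow hPMa)
    (sub_inner_smul_mem_orthogonal_span _ 0 _ ?_ ?_ ?_)
  · rw [hPM0, WHS.inner_eq_conj_wInner hω hfa hfa, WHS.wInner_self, hnorm]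
    simp
  · intro m hm
    rw [hPM0, hPMf, hinner m (Nat.one_le_iff_ne_zero.mpr hm), map_zero]
  · intro m hm
    simp [lp.inner_single_right, hPMX, WHS.shift_apply_eq_zero hm ha_vanish]

/-- if `f` is `H²_ω`-inner (modelled on `ℓ²`) and `d` is the largest
integer with `z^d ∣ f`, then `⟨z^d, f⟩ · f` is the orthogonal projection of `z^d`
onto the `z`-invariant subspace `[f]` generated by `f` (the closure of the
polynomial multiples of `f`): it lies in `[f]` and `z^d − ⟨z^d, f⟩ f ⊥ [f]`. -/
theorem stmt13 (ω : ℕ → ℝ) (hpos : ∀ n, 0 < ω n) (hω0 : ω 0 = 1)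
    (hlim : Filter.Tendsto (fun n => ω (n + 1) / ω n) Filter.atTop (nhds 1))
    (f : lp (fun _ : ℕ => ℂ) 2)
    (hf : WHS.IsInner ω (fun n => f n / (Real.sqrt (ω n) : ℂ)))
    (d : ℕ) (hvanish : ∀ n < d, f n = 0) (hd : f d ≠ 0)
    (PM : Polynomial ℂ → lp (fun _ : ℕ => ℂ) 2)
    (hPM : ∀ (p : Polynomial ℂ) (n : ℕ),
      (PM p) n = (Real.sqrt (ω n) : ℂ) *
        ∑ j ∈ Finset.range (n + 1), p.coeff j * (f (n - j) / (Real.sqrt (ω (n - j)) : ℂ))) :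
    ((inner ℂ f (lp.single 2 d ((Real.sqrt (ω d) : ℂ))) : ℂ) • f ∈
        (Submodule.span ℂ (Set.range PM)).topologicalClosure) ∧
      lp.single 2 d ((Real.sqrt (ω d) : ℂ)) -
          (inner ℂ f (lp.single 2 d ((Real.sqrt (ω d) : ℂ))) : ℂ) • f ∈
        ((Submodule.span ℂ (Set.range PM)).topologicalClosure)ᗮ :=
  stmt13_general ω hpos f hf d hvanish PM hPM
end
end
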